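/- arXiv:1110.3843 — 6 statements merged into one kernel-verified Lean document; each statement's English description precedes it below -/
import Mathlib

section
/- If G is an r-robust directed graph and G' is obtained from G by removing at most K incoming edges from each node, where K < r, then G' is (r−K)-robust. -/
open Finset

def rReachable {V : Type*} [DecidableEq V] (N : V → Finset V) (S : Finset V) (r : ℕ) : Prop :=
  ∃ i ∈ S, r ≤ ((N i) \ S).card

def rRobust {V : Type*} [Fintype V] [DecidableEq V] (N : V → Finset V) (r : ℕ) : Prop :=
  ∀ S₁ S₂ : Finset V, S₁.Nonempty → S₂.Nonempty → Disjoint S₁ S₂ →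
    rReachable N S₁ r ∨ rReachable N S₂ r

theorem Finset.card_sdiff_le_card_sdiff_add_card_sdiff {α : Type*} [DecidableEq α]
    (s t u : Finset α) : #(s \ u) ≤ #(s \ t) + #(t \ u) :=
  (card_le_card (sdiff_triangle s t u)).trans (card_union_le _ _)

section RemovingEdges

variable {V : Type*} [DecidableEq V] {N N' : V → Finset V} {K r : ℕ}

theorem rReachable.of_card_sdiff_le {S : Finset V} (hreach : rReachable N S r)
    (hrem : ∀ i, #(N i \ N' i) ≤ K) : rReachable N' S (r - K) := by
  obtain ⟨i, hiS, hr⟩ := hreach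
  refine ⟨i, hiS, ?_⟩
  have := card_sdiff_le_card_sdiff_add_card_sdiff (N i) (N' i) S
  have := hrem i
  omega

theorem rRobust.of_card_sdiff_le [Fintype V] (hrob : rRobust N r)
    (hrem : ∀ i, #(N i \ N' i) ≤ K) : rRobust N' (r - K) := by
  intro S₁ S₂ h₁ h₂ hdisj
  exact (hrob S₁ S₂ h₁ h₂ hdisj).imp (·.of_card_sdiff_le hrem) (·.of_card_sdiff_le hrem)

end RemovingEdges

theorem stmt3_general {V : Type*} [Fintype V] [DecidableEq V]
    (N N' : V → Finset V) (K r : ℕ)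
    (hrem : ∀ i, ((N i) \ (N' i)).card ≤ K)
    (hrob : rRobust N r) :
    rRobust N' (r - K) :=
  hrob.of_card_sdiff_le hrem

theorem stmt3 {V : Type*} [Fintype V] [DecidableEq V]
    (hcard : 2 ≤ Fintype.card V)
    (N N' : V → Finset V) (K r : ℕ)
    (hsub : ∀ i, N' i ⊆ N i)
    (hrem : ∀ i, ((N i) \ (N' i)).card ≤ K)
    (hKr : K < r)
    (hrob : rRobust N r) :
    rRobust N' (r - K) :=
  stmt3_general N N' K r hrem hrob
end

section
/- If a directed graph G is r-robust for some r ≥ 1, then G contains a rooted spanning tree (i.e., there exists a node from which every other node is reachable by a directed path). -/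
open Finset

/-!
An ancestor set (all vertices reaching a fixed vertex) is nonempty and has no in-neighbours
outside itself. Such sets are never `r`-reachable for `r ≥ 1`, so robustness forces any two of
them to meet. Intersections of such sets are again of this kind, hence all ancestor sets share a
common vertex, and that vertex is a root.
-/

section InClosed

variable {V : Type*} {N : V → Finset V}

variable (N) in
def IsInClosed (S : Finset V) : Prop :=
  ∀ i ∈ S, N i ⊆ S

theorem IsInClosed.inter [DecidableEq V] {S T : Finset V} (hS : IsInClosed N S)
    (hT : IsInClosed N T) : IsInClosed N (S ∩ T) := by
  intro i hi
  rw [mem_inter] at hi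
  exact subset_inter (hS i hi.1) (hT i hi.2)

theorem IsInClosed.not_rReachable [DecidableEq V] {S : Finset V} {r : ℕ}
    (hS : IsInClosed N S) (hr : 1 ≤ r) : ¬ rReachable N S r := by
  rintro ⟨i, hi, hcard⟩
  have hempty : N i \ S = ∅ := sdiff_eq_empty_iff_subset.mpr (hS i hi)
  rw [hempty, card_empty] at hcard
  omega

variable [Fintype V]

variable (N) in
open Classical in
noncomputable def ancestors (v : V) : Finset V :=
  {u | Relation.ReflTransGen (fun a b => a ∈ N b) u v}

@[simp]
theorem mem_ancestors {u v : V} :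
    u ∈ ancestors N v ↔ Relation.ReflTransGen (fun a b => a ∈ N b) u v := by
  simp [ancestors]

theorem ancestors_nonempty (v : V) : (ancestors N v).Nonempty :=
  ⟨v, mem_ancestors.mpr .refl⟩

theorem isInClosed_ancestors (v : V) : IsInClosed N (ancestors N v) := by
  intro i hi j hj
  rw [mem_ancestors] at hi ⊢
  exact .head hj hi

variable [DecidableEq V] {r : ℕ}

theorem rRobust.inter_nonempty (hrob : rRobust N r) (hr : 1 ≤ r) {S T : Finset V}
    (hSne : S.Nonempty) (hTne : T.Nonempty) (hS : IsInClosed N S) (hT : IsInClosed N T) :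
    (S ∩ T).Nonempty := by
  rw [← not_disjoint_iff_nonempty_inter]
  intro hdisj
  rcases hrob S T hSne hTne hdisj with h | h
  · exact hS.not_rReachable hr h
  · exact hT.not_rReachable hr h

theorem rRobust.inf_nonempty [Nonempty V] (hrob : rRobust N r) (hr : 1 ≤ r) {ι : Type*}
    (s : Finset ι) (f : ι → Finset V) (hne : ∀ i ∈ s, (f i).Nonempty)
    (hclosed : ∀ i ∈ s, IsInClosed N (f i)) :
    (s.inf f).Nonempty ∧ IsInClosed N (s.inf f) := by
  classical
  induction s using Finset.induction_on with
  | empty => exact ⟨univ_nonempty, fun _ _ => subset_univ _⟩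
  | insert i s _ ih =>
    obtain ⟨ihne, ihclosed⟩ := ih (fun j hj => hne j (mem_insert_of_mem hj))
      (fun j hj => hclosed j (mem_insert_of_mem hj))
    have hi := hclosed i (mem_insert_self i s)
    rw [inf_insert]
    exact ⟨hrob.inter_nonempty hr (hne i (mem_insert_self i s)) ihne hi ihclosed,
      hi.inter ihclosed⟩

end InClosed

-- `j ∈ N i` encodes the edge `(j, i)`: `j` influences `i`.
/-- An edge `(j, i)` (i.e. `j ∈ N i`) means `j` influences `i`; a rooted spanning
tree exists if some root reaches every vertex along directed (influence) edges. -/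
theorem stmt4 {V : Type*} [Fintype V] [DecidableEq V] [Nonempty V]
    (N : V → Finset V) (r : ℕ) (hr : 1 ≤ r) (hrob : rRobust N r) :
    ∃ root : V, ∀ v : V,
      Relation.ReflTransGen (fun a b => a ∈ N b) root v := by
  obtain ⟨root, hroot⟩ := (hrob.inf_nonempty hr univ (ancestors N)
    (fun v _ => ancestors_nonempty v) (fun v _ => isInClosed_ancestors v)).1
  exact ⟨root, fun v => mem_ancestors.mp (mem_inf.mp hroot v (mem_univ v))⟩
end

section
/- Let G = (V,E) be an r-robust directed graph. Form G' by adding a new vertex v_new along with a set of new edges incident to v_new such that v_new has in-degree at least r. Then G' is r-robust. -/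
open Finset

/-! Restrict two disjoint nonempty vertex sets of `G'` to the old vertices. If a restriction is
empty, that set is `{v_new}`, which is `r`-reachable because `v_new` has at least `r` in-neighbours
other than itself. Otherwise `r`-robustness of `G` makes one restriction `r`-reachable in `G`, and
the same vertex witnesses it in `G'`: its old in-neighbours outside the set remain so. -/

theorem rReachable_of_mem_of_disjoint {W : Type*} [DecidableEq W] {N : W → Finset W}
    {S : Finset W} {r : ℕ} {v : W} (hv : v ∈ S) (hdisj : Disjoint (N v) S)
    (hr : r ≤ (N v).card) : rReachable N S r :=
  ⟨v, hv, by rwa [sdiff_eq_self_of_disjoint hdisj]⟩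

theorem disjoint_eraseNone {V : Type*} {S T : Finset (Option V)} (h : Disjoint S T) :
    Disjoint S.eraseNone T.eraseNone :=
  disjoint_left.2 fun _ hS hT => disjoint_left.1 h (mem_eraseNone.1 hS) (mem_eraseNone.1 hT)

section OptionExtension

variable {V : Type*} [DecidableEq V] {N : V → Finset V} {N' : Option V → Finset (Option V)}
  {r : ℕ} {S : Finset (Option V)}

theorem rReachable_of_rReachable_eraseNone (hsub : ∀ i j : V, j ∈ N i → some j ∈ N' (some i))
    (h : rReachable N S.eraseNone r) : rReachable N' S r := by
  obtain ⟨i, hi, hr⟩ := h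
  refine ⟨some i, mem_eraseNone.1 hi, hr.trans ?_⟩
  rw [← card_map Function.Embedding.some]
  refine card_le_card fun x hx => ?_
  obtain ⟨j, hj, rfl⟩ := mem_map.1 hx
  rw [mem_sdiff, mem_eraseNone] at hj
  exact mem_sdiff.2 ⟨hsub i j hj.1, hj.2⟩

theorem rReachable_of_eraseNone_eq_empty (hnone : none ∉ N' none) (hdeg : r ≤ (N' none).card)
    (hS : S.Nonempty) (h : S.eraseNone = ∅) : rReachable N' S r := by
  have hS_none : ∀ x ∈ S, x = none := by
    rintro (_ | j) hj
    · rfl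
    · simpa [h] using mem_eraseNone.2 hj
  obtain ⟨x, hx⟩ := hS
  refine rReachable_of_mem_of_disjoint (hS_none x hx ▸ hx) ?_ hdeg
  exact disjoint_left.2 fun y hy hyS => hnone (hS_none y hyS ▸ hy)

end OptionExtension

/-- Adding a new vertex (`none` in `Option V`) with in-degree at least `r`
(all its in-neighbors coming from the original vertices) to an `r`-robust graph,
keeping the edges among original vertices unchanged, yields an `r`-robust graph. -/
theorem stmt7 {V : Type*} [Fintype V] [DecidableEq V]
    (N : V → Finset V) (r : ℕ) (hrob : rRobust N r)
    (N' : Option V → Finset (Option V))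
    (hold : ∀ i j : V, some j ∈ N' (some i) ↔ j ∈ N i)
    (hnew_from_old : none ∉ N' none)
    (hdeg : r ≤ (N' none).card) :
    rRobust N' r := by
  intro S₁ S₂ h₁ h₂ hdis
  rcases S₁.eraseNone.eq_empty_or_nonempty with h₁' | h₁'
  · exact .inl (rReachable_of_eraseNone_eq_empty hnew_from_old hdeg h₁ h₁')
  rcases S₂.eraseNone.eq_empty_or_nonempty with h₂' | h₂'
  · exact .inr (rReachable_of_eraseNone_eq_empty hnew_from_old hdeg h₂ h₂')
  have hsub i j := (hold i j).2
  exact (hrob _ _ h₁' h₂' (disjoint_eraseNone hdis)).imp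
    (rReachable_of_rReachable_eraseNone hsub) (rReachable_of_rReachable_eraseNone hsub)
end

section
/- If a directed graph G is (2f+1)-robust and M is an f-local set of vertices, then the subgraph induced on the normal nodes N = V \ M is (f+1)-robust. -/
/-!
An in-neighbour of a normal node that lies outside a set `S` of normal nodes is either a normal
node outside `S` or a node of `M`, and `f`-locality allows at most `f` of the latter. So a node
with `r + f` in-neighbours outside `S` in `G` keeps at least `r` of them in the induced graph,
and the `(2f+1)`-robustness witness of `G` for two disjoint sets of normal nodes is an
`(f+1)`-robustness witness of the induced graph.
-/

open Finset

lemma card_sdiff_map_subtype_le {V : Type*} [DecidableEq V] (A M : Finset V)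
    (S : Finset {x : V // x ∉ M}) :
    #(A \ S.map (Function.Embedding.subtype (· ∉ M))) ≤ #(A.subtype (· ∉ M) \ S) + #(A ∩ M) := by
  have hsub : A \ S.map (Function.Embedding.subtype (· ∉ M)) ⊆
      (A.subtype (· ∉ M) \ S).map (Function.Embedding.subtype (· ∉ M)) ∪ (A ∩ M) := by
    intro x hx
    simp only [mem_sdiff, mem_map, Function.Embedding.coe_subtype] at hx
    by_cases hxM : x ∈ M
    · exact mem_union_right _ (mem_inter.mpr ⟨hx.1, hxM⟩)
    · refine mem_union_left _ (mem_map.mpr ⟨⟨x, hxM⟩, ?_, rfl⟩)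
      exact mem_sdiff.mpr ⟨mem_subtype.mpr hx.1, fun hS => hx.2 ⟨_, hS, rfl⟩⟩
  calc #(A \ S.map (Function.Embedding.subtype (· ∉ M)))
      _ ≤ #((A.subtype (· ∉ M) \ S).map (Function.Embedding.subtype (· ∉ M)) ∪ (A ∩ M)) :=
        card_le_card hsub
      _ ≤ #(A.subtype (· ∉ M) \ S) + #(A ∩ M) := by
        rw [← card_map (Function.Embedding.subtype (· ∉ M))]
        exact card_union_le _ _

lemma rReachable_subtype_of_rReachable_map {V : Type*} [DecidableEq V]
    (N : V → Finset V) (M : Finset V) {f r : ℕ} (hloc : ∀ i ∉ M, #(N i ∩ M) ≤ f)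
    {S : Finset {x : V // x ∉ M}}
    (hS : rReachable N (S.map (Function.Embedding.subtype (· ∉ M))) (r + f)) :
    rReachable (fun i : {x : V // x ∉ M} => (N i.1).subtype (· ∉ M)) S r := by
  obtain ⟨_, hiS, hi⟩ := hS
  obtain ⟨i, hiS, rfl⟩ := mem_map.mp hiS
  refine ⟨i, (mem_map' _).mp hiS, ?_⟩
  have hsplit := card_sdiff_map_subtype_le (N i.1) M S
  have hi_loc := hloc i.1 i.2
  simp only [Function.Embedding.coe_subtype] at hi hsplit ⊢
  omega

theorem rRobust.subtype_compl {V : Type*} [Fintype V] [DecidableEq V]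
    {N : V → Finset V} {f r : ℕ} (hrob : rRobust N (r + f))
    {M : Finset V} (hloc : ∀ i ∉ M, #(N i ∩ M) ≤ f) :
    rRobust (fun i : {x : V // x ∉ M} => (N i.1).subtype (· ∉ M)) r := by
  intro S₁ S₂ h₁ h₂ hdisj
  let e := Function.Embedding.subtype (· ∉ M)
  exact (hrob (S₁.map e) (S₂.map e) h₁.map h₂.map (disjoint_map e |>.mpr hdisj)).imp
    (rReachable_subtype_of_rReachable_map N M hloc) (rReachable_subtype_of_rReachable_map N M hloc)

theorem stmt11_general {V : Type*} [Fintype V] [DecidableEq V]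
    (N : V → Finset V) (f : ℕ) (hrob : rRobust N (2 * f + 1))
    (M : Finset V) (hloc : ∀ i ∉ M, ((N i) ∩ M).card ≤ f) :
    rRobust (fun i : {x : V // x ∉ M} => (N i.1).subtype (fun x => x ∉ M)) (f + 1) := by
  have hrob' : rRobust N ((f + 1) + f) := by rwa [show f + 1 + f = 2 * f + 1 by ring]
  exact hrob'.subtype_compl hloc

theorem stmt11 {V : Type*} [Fintype V] [DecidableEq V]
    (N : V → Finset V) (f : ℕ) (hrob : rRobust N (2 * f + 1))
    (M : Finset V) (hloc : ∀ i ∉ M, ((N i) ∩ M).card ≤ f)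
    (hcard : 2 ≤ Fintype.card {x : V // x ∉ M}) :
    rRobust (fun i : {x : V // x ∉ M} => (N i.1).subtype (fun x => x ∉ M)) (f + 1) :=
  stmt11_general N f hrob M hloc
end

section
/- Under the f-local malicious model, if the graph G is strongly (2f+1)-robust, then the Certified Propagation Algorithm succeeds: every normal node eventually accepts the source's value. Formally: let M be an f-local set not containing the source s, and let A_t be the set of nodes having accepted the broadcast value by time t, with A_0 = {s} and A_{t+1} = A_t ∪ {normal i : i is an out-neighbor of s, or i has at least f+1 in-neighbors in A_t \ M ∪ (accepted normal nodes)}. Then the increasing sequence of accepted normal-node sets eventually equals all normal nodes. -/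
/-!
The accepted sets increase inside the finite lattice `Finset V`, so they stabilise at some
`A T`. If a normal node never accepts, apply strong `(2f+1)`-robustness to the set `S` of normal
nodes outside `A T`. A node of `S` with `2f+1` in-neighbours outside `S` has at most `f` of them
malicious, hence `f+1` accepted normal ones; a node of `S` whose in-neighbours contain all of `Sᶜ`
hears the source itself. Either way it accepts in round `T+1`, contradicting stabilisation.
-/

open Finset

def stronglyRRobust {V : Type*} [Fintype V] [DecidableEq V]
    (N : V → Finset V) (r : ℕ) : Prop :=
  ∀ S : Finset V, S.Nonempty →
    rReachable N S r ∨ ∃ i ∈ S, Sᶜ ⊆ N i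

section

variable {V : Type*} [Fintype V] [DecidableEq V]

def cpaRound (N : V → Finset V) (f : ℕ) (M : Finset V) (s : V) (A : Finset V) : Finset V :=
  A ∪ univ.filter (fun i => i ∉ M ∧ (s ∈ N i ∨ f + 1 ≤ (N i ∩ (A \ M)).card))

lemma mem_of_cpaRound_eq_self {N : V → Finset V} {f : ℕ} {M B : Finset V} {s i : V}
    (hB : cpaRound N f M s B = B) (hi : i ∉ M)
    (hcert : s ∈ N i ∨ f + 1 ≤ (N i ∩ (B \ M)).card) : i ∈ B := by
  rw [← hB]
  exact mem_union_right _ (mem_filter.2 ⟨mem_univ i, hi, hcert⟩)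

lemma card_sdiff_compl_union_le (X A M : Finset V) :
    (X \ (A ∪ M)ᶜ).card ≤ (X ∩ M).card + (X ∩ (A \ M)).card := by
  have hsplit : X \ (A ∪ M)ᶜ = X ∩ M ∪ X ∩ (A \ M) := by
    ext x
    simp only [mem_sdiff, mem_compl, mem_union, mem_inter, not_not]
    tauto
  rw [hsplit]
  exact card_union_le _ _

theorem forall_mem_of_cpaRound_eq_self {N : V → Finset V} {f : ℕ}
    (hrob : stronglyRRobust N (2 * f + 1)) {M : Finset V} (hloc : ∀ i ∉ M, (N i ∩ M).card ≤ f)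
    {s : V} {B : Finset V} (hsB : s ∈ B) (hB : cpaRound N f M s B = B) :
    ∀ i ∉ M, i ∈ B := by
  by_contra! ⟨j, hjM, hjB⟩
  -- `(B ∪ M)ᶜ` is the set `S` of normal nodes that have not accepted.
  have hS : ((B ∪ M)ᶜ).Nonempty := ⟨j, by simp [hjM, hjB]⟩
  rcases hrob _ hS with ⟨i, hiS, hreach⟩ | ⟨i, hiS, hsub⟩
  · simp only [mem_compl, mem_union, not_or] at hiS
    have hcert : f + 1 ≤ (N i ∩ (B \ M)).card := by
      have hsplit := card_sdiff_compl_union_le (N i) B M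
      have hfew := hloc i hiS.2
      omega
    exact hiS.1 (mem_of_cpaRound_eq_self hB hiS.2 (Or.inr hcert))
  · simp only [mem_compl, mem_union, not_or] at hiS
    have hsN : s ∈ N i := hsub (by simp [hsB])
    exact hiS.1 (mem_of_cpaRound_eq_self hB hiS.2 (Or.inl hsN))

lemma exists_succ_eq_of_monotone {α : Type*} [PartialOrder α] [WellFoundedGT α]
    {a : ℕ → α} (ha : Monotone a) : ∃ T, a (T + 1) = a T := by
  obtain ⟨T, hT⟩ := WellFoundedGT.monotone_chain_condition ⟨a, ha⟩
  exact ⟨T, (hT (T + 1) T.le_succ).symm⟩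

end

theorem stmt16_general {V : Type*} [Fintype V] [DecidableEq V]
    (N : V → Finset V) (f : ℕ) (hrob : stronglyRRobust N (2 * f + 1))
    (M : Finset V) (hloc : ∀ i ∉ M, ((N i) ∩ M).card ≤ f)
    (s : V)
    (A : ℕ → Finset V)
    (hA0 : A 0 = {s})
    (hAsucc : ∀ t : ℕ, A (t + 1) = A t ∪
      Finset.univ.filter (fun i =>
        i ∉ M ∧ (s ∈ N i ∨ f + 1 ≤ ((N i) ∩ (A t \ M)).card))) :
    ∃ T : ℕ, ∀ i : V, i ∉ M → i ∈ A T := by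
  have hmono : Monotone A := monotone_nat_of_le_succ fun t => by
    rw [hAsucc t]
    exact subset_union_left
  obtain ⟨T, hT⟩ := exists_succ_eq_of_monotone hmono
  have hsA : s ∈ A T := hmono T.zero_le (by simp [hA0])
  exact ⟨T, forall_mem_of_cpaRound_eq_self hrob hloc hsA ((hAsucc T).symm.trans hT)⟩

/-- If the network is strongly `(2f+1)`-robust and `M` is an `f`-local set of
malicious nodes not containing the source `s`, then the Certified Propagation
Algorithm succeeds: the monotone sequence of accepted sets eventually contains
every normal node. -/
theorem stmt16 {V : Type*} [Fintype V] [DecidableEq V]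
    (N : V → Finset V) (f : ℕ) (hrob : stronglyRRobust N (2 * f + 1))
    (M : Finset V) (hloc : ∀ i ∉ M, ((N i) ∩ M).card ≤ f)
    (s : V) (hs : s ∉ M)
    (A : ℕ → Finset V)
    (hA0 : A 0 = {s})
    (hAsucc : ∀ t : ℕ, A (t + 1) = A t ∪
      Finset.univ.filter (fun i =>
        i ∉ M ∧ (s ∈ N i ∨ f + 1 ≤ ((N i) ∩ (A t \ M)).card))) :
    ∃ T : ℕ, ∀ i : V, i ∉ M → i ∈ A T :=
  stmt16_general N f hrob M hloc s A hA0 hAsucc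
end

section
/- There exists a graph G and an integer f ≥ 1 such that X(G) ≤ 2f but G is strongly (2f+1)-robust, where X(G) = min over non-adjacent pairs (v,s) of the number of neighbors of v strictly closer to s than v. Concretely, for f = 1, the 8-vertex graph consisting of a 5-clique {1,...,5}, vertices 6 and 7 adjacent to {2,3,4} and {3,4,5} respectively, and vertex 8 adjacent to {3,4,6,7}, satisfies X(G) ≤ 2 and is strongly 3-robust. -/
open Finset

/-!
Vertex 8 (index 7) is at distance 2 from vertex 1 (index 0), so its neighbours strictly closer
to vertex 1 are exactly their common neighbours, vertices 3 and 4; hence X(G) ≤ 2. Strong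
3-robustness is a finite check over the 255 nonempty vertex subsets, which becomes decidable
once it is phrased with finsets instead of sets.
-/

/-- The underlying relation for the 8-vertex example graph: a 5-clique on
vertices `0,…,4`; vertex `5` adjacent to `1,2,3`; vertex `6` adjacent to
`2,3,4`; vertex `7` adjacent to `2,3,5,6`. (0-indexed version of the paper's
vertices `1,…,8`.) -/
def e8 : Fin 8 → Fin 8 → Prop := fun a b =>
  (a.val < 5 ∧ b.val < 5) ∨
  (a = 5 ∧ (b = 1 ∨ b = 2 ∨ b = 3)) ∨
  (a = 6 ∧ (b = 2 ∨ b = 3 ∨ b = 4)) ∨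
  (a = 7 ∧ (b = 2 ∨ b = 3 ∨ b = 5 ∨ b = 6))

def G8 : SimpleGraph (Fin 8) := SimpleGraph.fromRel e8

namespace SimpleGraph

variable {V : Type*} {G : SimpleGraph V}

lemma dist_eq_two_iff {u v : V} :
    G.dist u v = 2 ↔ u ≠ v ∧ ¬ G.Adj u v ∧ (G.commonNeighbors u v).Nonempty := by
  rw [dist, ENat.toNat_eq_iff two_ne_zero]
  exact_mod_cast edist_eq_two_iff

lemma setOf_adj_and_dist_lt_eq_commonNeighbors {v s : V} (h : G.dist v s = 2) :
    {u | G.Adj v u ∧ G.dist u s < G.dist v s} = G.commonNeighbors v s := by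
  obtain ⟨-, hvs, -⟩ := dist_eq_two_iff.mp h
  ext u
  simp only [Set.mem_ofPred_eq, mem_commonNeighbors, h]
  refine ⟨fun ⟨hvu, hlt⟩ ↦ ⟨hvu, ?_⟩, fun ⟨hvu, hsu⟩ ↦ ⟨hvu, ?_⟩⟩
  · have hreach : G.Reachable u s :=
      hvu.symm.reachable.trans (Reachable.of_dist_ne_zero (by omega))
    have hus : u ≠ s := by rintro rfl; exact hvs hvu
    have hpos := hreach.pos_dist_of_ne hus
    exact (dist_eq_one_iff_adj.mp (by omega)).symm
  · rw [dist_eq_one_iff_adj.mpr hsu.symm]; norm_num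

def IsStronglyRobust (G : SimpleGraph V) (r : ℕ) : Prop :=
  ∀ S : Set V, S.Nonempty →
    (∃ i ∈ S, r ≤ (G.neighborSet i \ S).ncard) ∨ (∃ i ∈ S, ∀ j ∉ S, G.Adj i j)

lemma IsStronglyRobust.of_finset [Fintype V] [DecidableEq V] [DecidableRel G.Adj] {r : ℕ}
    (h : ∀ S : Finset V, S.Nonempty →
      (∃ i ∈ S, r ≤ (G.neighborFinset i \ S).card) ∨ (∃ i ∈ S, ∀ j ∉ S, G.Adj i j)) :
    G.IsStronglyRobust r := by
  classical
  intro S hS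
  have hcoe (i : V) : G.neighborSet i \ S = ↑(G.neighborFinset i \ S.toFinset) := by
    rw [Finset.coe_sdiff, coe_neighborFinset, Set.coe_toFinset]
  rcases h S.toFinset (Set.toFinset_nonempty.mpr hS) with ⟨i, hi, hcard⟩ | ⟨i, hi, hadj⟩
  · exact Or.inl ⟨i, Set.mem_toFinset.mp hi, by rwa [hcoe, Set.ncard_coe_finset]⟩
  · exact Or.inr ⟨i, Set.mem_toFinset.mp hi, fun j hj ↦ hadj j (mt Set.mem_toFinset.mp hj)⟩

end SimpleGraph

open SimpleGraph

instance : DecidableRel G8.Adj := fun a b => by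
  unfold G8 e8
  exact inferInstanceAs (Decidable (a ≠ b ∧ _))

lemma isStronglyRobust_G8 : G8.IsStronglyRobust 3 :=
  IsStronglyRobust.of_finset (by set_option maxRecDepth 10000 in decide)

/-- There exist a graph `G` and `f ≥ 1` with `X(G) ≤ 2f` (some non-adjacent pair
`(v,s)` has at most `2f` neighbors of `v` strictly closer to `s`) that is
nevertheless strongly `(2f+1)`-robust: for every nonempty vertex subset `S`,
either some node of `S` has at least `2f+1` neighbors outside `S`, or some node
of `S` is adjacent to every vertex outside `S`. The graph `G8` with `f = 1`
witnesses this. -/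
theorem stmt17 :
    ∃ f : ℕ, 1 ≤ f ∧
      (∃ v s : Fin 8, v ≠ s ∧ ¬ G8.Adj v s ∧
        ({u : Fin 8 | G8.Adj v u ∧ G8.dist u s < G8.dist v s}).ncard ≤ 2 * f) ∧
      (∀ S : Set (Fin 8), S.Nonempty →
        (∃ i ∈ S, 2 * f + 1 ≤ (G8.neighborSet i \ S).ncard) ∨
        (∃ i ∈ S, ∀ j ∉ S, G8.Adj i j)) := by
  have hdist : G8.dist 7 0 = 2 := dist_eq_two_iff.mpr ⟨by decide, by decide, 2, by decide⟩
  refine ⟨1, le_rfl, ⟨7, 0, by decide, by decide, ?_⟩, isStronglyRobust_G8⟩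
  rw [setOf_adj_and_dist_lt_eq_commonNeighbors hdist, Set.ncard_eq_toFinset_card']
  decide
end
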